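/- Let M : ℝⁿ → ℝ^{n×n} be a uniformly bounded C¹ metric, a₁I ⪯ M(x) ⪯ a₂I with a₁ > 0, satisfying the contraction inequality Ṁ + (Df)ᵀM + M(Df) ⪯ −ρM for some ρ > 0 along the forward-complete autonomous system ẋ = f(x), f C¹. Then any two solutions converge exponentially: |X(x_a,t) − X(x_b,t)| ≤ √(a₂/a₁) |x_a − x_b| e^{−ρt/2} for all x_a, x_b ∈ ℝⁿ and t ≥ 0. -/

import Mathlib

open Matrix MeasureTheory

/-- Jacobian matrix of a map between finite-dimensional spaces. -/
noncomputable def jac {n N : ℕ} (φ : (Fin n → ℝ) → (Fin N → ℝ)) (x : Fin n → ℝ) :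
    Matrix (Fin N) (Fin n) ℝ :=
  Matrix.of fun i j => fderiv ℝ φ x (Pi.single j 1) i

/-- A real square matrix is Hurwitz if all its (complex) eigenvalues have
negative real part. -/
def Hurwitz {N : ℕ} (A : Matrix (Fin N) (Fin N) ℝ) : Prop :=
  ∀ μ ∈ spectrum ℂ (A.map (Complex.ofReal ·)), μ.re < 0

/-- Euclidean norm on `Fin n → ℝ`. -/
noncomputable def euclNorm {n : ℕ} (x : Fin n → ℝ) : ℝ :=
  Real.sqrt (∑ i, x i ^ 2)

/-!
For two nearby solutions `x(t), y(t)` the quantity `V = (x - y)ᵀ M(x) (x - y)` is the Riemannian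
energy of the segment between them with the metric frozen at `x`. Differentiating along the flow,
the contraction inequality gives `V̇ ≤ -ρ V` up to a Taylor remainder of `f`, which the modulus of
continuity of `Df` makes smaller than `(ρ - ν) V` for any `ν < ρ` while the solutions stay close;
and `a₁ |x - y|² ≤ V ≤ a₂ |x - y|²` keeps them close once `V` decays. Hence
`|x(t) - y(t)| ≤ √(a₂/a₁) |x(0) - y(0)| e^{-νt/2}` for close initial points.

The flow is not known to depend continuously on the initial point, so instead of a smooth path of
solutions we join `x_a` to `x_b` by a chain of points, spaced so finely that the local estimate
applies to consecutive points on all of `[0, t]`: uniform continuity of `Df` on a compact tube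
around the solution from `x_a` makes the spacing uniform, and the triangle inequality adds up the
estimates. Finally let `ν ↑ ρ`.
-/

open Set Filter

theorem ContinuousAt.ge_of_forall_mem_Ioo {g : ℝ → ℝ} {a b c : ℝ} (hg : ContinuousAt g c)
    (hbc : b < c) (h : ∀ x ∈ Ioo b c, a ≤ g x) : a ≤ g c :=
  ge_of_tendsto (hg.tendsto.mono_left nhdsWithin_le_nhds) (eventually_of_mem (Ioo_mem_nhdsLT hbc) h)

theorem le_sqrt_div_mul_of_mul_sq_le {a b x y : ℝ} (ha : 0 < a) (hy : 0 ≤ y)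
    (h : a * x ^ 2 ≤ b * y ^ 2) : x ≤ √(b / a) * y :=
  calc x ≤ √(x ^ 2) := by rw [Real.sqrt_sq_eq_abs]; exact le_abs_self x
    _ ≤ √(b / a * y ^ 2) := by
        gcongr
        rw [div_mul_eq_mul_div, le_div_iff₀ ha]
        linarith
    _ = √(b / a) * y := by rw [Real.sqrt_mul' _ (sq_nonneg y), Real.sqrt_sq hy]

theorem le_mul_exp_of_hasDerivAt {V V' : ℝ → ℝ} {T ν : ℝ}
    (hV : ∀ t ∈ Icc 0 T, HasDerivAt V (V' t) t)
    (hV' : ∀ t ∈ Ico 0 T, V t = V 0 * Real.exp (-ν * t) → V' t < -ν * V t) :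
    ∀ t ∈ Icc 0 T, V t ≤ V 0 * Real.exp (-ν * t) := by
  have hB (t : ℝ) : HasDerivAt (fun t => V 0 * Real.exp (-ν * t))
      (-ν * (V 0 * Real.exp (-ν * t))) t :=
    (((hasDerivAt_id' t).const_mul (-ν)).exp.const_mul (V 0)).congr_deriv (by ring)
  refine image_le_of_deriv_right_lt_deriv_boundary'
    (fun t ht => (hV t ht).continuousAt.continuousWithinAt)
    (fun t ht => (hV t (Ico_subset_Icc_self ht)).hasDerivWithinAt) (by simp)
    (fun t _ => (hB t).continuousAt.continuousWithinAt) (fun t _ => (hB t).hasDerivWithinAt)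
    fun t ht htouch => ?_
  rw [← htouch]
  exact hV' t ht htouch

theorem exists_pos_forall_dist_le_of_isCompact {α β : Type*} [PseudoMetricSpace α]
    [ProperSpace α] [PseudoMetricSpace β] {g : α → β} (hg : Continuous g) {S : Set α}
    (hS : IsCompact S) {R ε : ℝ} (hR : 0 ≤ R) (hε : 0 < ε) :
    ∃ δ > 0, ∀ x ∈ Metric.cthickening R S, ∀ z, dist z x ≤ δ → dist (g z) (g x) ≤ ε := by
  obtain ⟨δ, hδ, hg_unif⟩ := Metric.uniformContinuousOn_iff.1
    ((hS.cthickening (r := 1 + R)).uniformContinuousOn_of_continuous hg.continuousOn) ε hε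
  refine ⟨min 1 (δ / 2), by positivity, fun x hx z hz => (hg_unif z ?_ x ?_ ?_).le⟩
  · exact Metric.cthickening_cthickening_subset zero_le_one hR S
      (Metric.mem_cthickening_of_dist_le z x 1 _ hx (hz.trans (min_le_left _ _)))
  · exact Metric.cthickening_mono (by linarith) S hx
  · exact hz.trans_lt ((min_le_right _ _).trans_lt (half_lt_self hδ))

section EuclNorm

variable {n : ℕ}

theorem euclNorm_eq_norm_toLp (v : Fin n → ℝ) : euclNorm v = ‖WithLp.toLp 2 v‖ := by
  simp [euclNorm, EuclideanSpace.norm_eq]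

theorem euclNorm_nonneg (v : Fin n → ℝ) : 0 ≤ euclNorm v :=
  Real.sqrt_nonneg _

theorem euclNorm_pos {v : Fin n → ℝ} (hv : v ≠ 0) : 0 < euclNorm v := by
  simpa [euclNorm_eq_norm_toLp] using hv

theorem euclNorm_sq (v : Fin n → ℝ) : euclNorm v ^ 2 = v ⬝ᵥ v := by
  rw [euclNorm, Real.sq_sqrt (by positivity)]
  simp [dotProduct, sq]

theorem euclNorm_smul (c : ℝ) (v : Fin n → ℝ) : euclNorm (c • v) = |c| * euclNorm v := by
  simp only [euclNorm_eq_norm_toLp, WithLp.toLp_smul, norm_smul, Real.norm_eq_abs]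

theorem euclNorm_sub_le_euclNorm_sub_add_euclNorm_sub (u v w : Fin n → ℝ) :
    euclNorm (u - w) ≤ euclNorm (u - v) + euclNorm (v - w) := by
  simp only [euclNorm_eq_norm_toLp, WithLp.toLp_sub]
  exact norm_sub_le_norm_sub_add_norm_sub _ _ _

theorem norm_le_euclNorm (v : Fin n → ℝ) : ‖v‖ ≤ euclNorm v := by
  refine (pi_norm_le_iff_of_nonneg (euclNorm_nonneg v)).2 fun i => ?_
  rw [Real.norm_eq_abs, euclNorm, ← Real.sqrt_sq_eq_abs]
  exact Real.sqrt_le_sqrt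
    (Finset.single_le_sum (f := fun j => v j ^ 2) (fun j _ => sq_nonneg _) (Finset.mem_univ i))

theorem euclNorm_le_sqrt_card_mul_norm (v : Fin n → ℝ) : euclNorm v ≤ √n * ‖v‖ := by
  rw [euclNorm, ← Real.sqrt_sq (norm_nonneg v), ← Real.sqrt_mul (Nat.cast_nonneg n)]
  refine Real.sqrt_le_sqrt ?_
  calc ∑ i, v i ^ 2 ≤ ∑ _i : Fin n, ‖v‖ ^ 2 := Finset.sum_le_sum fun i _ => by
        simpa [sq_abs] using pow_le_pow_left₀ (abs_nonneg _) (norm_le_pi_norm v i) 2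
    _ = n * ‖v‖ ^ 2 := by simp

theorem mem_cthickening_image_of_euclNorm_sub_le {γ : ℝ → Fin n → ℝ} {S : Set ℝ} {s : ℝ}
    (hs : s ∈ S) {x : Fin n → ℝ} {R : ℝ} (h : euclNorm (γ s - x) ≤ R) :
    x ∈ Metric.cthickening R (γ '' S) :=
  Metric.mem_cthickening_of_dist_le x (γ s) R _ (mem_image_of_mem γ hs)
    (by rw [dist_comm, dist_eq_norm]; exact (norm_le_euclNorm _).trans h)

end EuclNorm

section QuadraticForm

variable {n : ℕ} {A : Matrix (Fin n) (Fin n) ℝ} {a : ℝ}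

theorem mul_euclNorm_sq_le_dotProduct_mulVec (h : (A - a • 1).PosSemidef) (v : Fin n → ℝ) :
    a * euclNorm v ^ 2 ≤ v ⬝ᵥ (A *ᵥ v) := by
  have := h.dotProduct_mulVec_nonneg v
  simp only [star_trivial, sub_mulVec, smul_mulVec, one_mulVec, dotProduct_sub,
    dotProduct_smul, smul_eq_mul] at this
  rw [euclNorm_sq]
  linarith

theorem dotProduct_mulVec_le_mul_euclNorm_sq (h : (a • 1 - A).PosSemidef) (v : Fin n → ℝ) :
    v ⬝ᵥ (A *ᵥ v) ≤ a * euclNorm v ^ 2 := by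
  have := h.dotProduct_mulVec_nonneg v
  simp only [star_trivial, sub_mulVec, smul_mulVec, one_mulVec, dotProduct_sub,
    dotProduct_smul, smul_eq_mul] at this
  rw [euclNorm_sq]
  linarith

theorem Matrix.PosSemidef.of_posSemidef_sub_smul_one (ha : 0 ≤ a)
    (h : (A - a • 1).PosSemidef) : A.PosSemidef := by
  simpa using h.add (PosSemidef.one.smul ha)

theorem Matrix.PosSemidef.dotProduct_mulVec_sq_le (hA : A.PosSemidef) (u w : Fin n → ℝ) :
    (u ⬝ᵥ (A *ᵥ w)) ^ 2 ≤ (u ⬝ᵥ (A *ᵥ u)) * (w ⬝ᵥ (A *ᵥ w)) := by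
  have hsymm : w ⬝ᵥ (A *ᵥ u) = u ⬝ᵥ (A *ᵥ w) := by
    rw [dotProduct_mulVec, ← vecMul_transpose, ← conjTranspose_eq_transpose_of_trivial, hA.1.eq,
      dotProduct_comm]
  have hdisc := discrim_le_zero (a := w ⬝ᵥ (A *ᵥ w)) (b := 2 * u ⬝ᵥ (A *ᵥ w))
    (c := u ⬝ᵥ (A *ᵥ u)) fun s => by
      have := hA.dotProduct_mulVec_nonneg (s • w + u)
      simp only [star_trivial, mulVec_add, mulVec_smul, dotProduct_add, add_dotProduct,
        dotProduct_smul, smul_dotProduct, smul_eq_mul, hsymm] at this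
      linarith
  rw [discrim] at hdisc
  linarith

theorem abs_dotProduct_mulVec_le (ha : 0 ≤ a) (hA : A.PosSemidef) (h : (a • 1 - A).PosSemidef)
    (u w : Fin n → ℝ) : |u ⬝ᵥ (A *ᵥ w)| ≤ a * (euclNorm u * euclNorm w) := by
  have hu := euclNorm_nonneg u
  have hw := euclNorm_nonneg w
  refine abs_le_of_sq_le_sq ?_ (by positivity)
  calc (u ⬝ᵥ (A *ᵥ w)) ^ 2 ≤ (u ⬝ᵥ (A *ᵥ u)) * (w ⬝ᵥ (A *ᵥ w)) :=
        hA.dotProduct_mulVec_sq_le u w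
    _ ≤ (a * euclNorm u ^ 2) * (a * euclNorm w ^ 2) :=
        mul_le_mul (dotProduct_mulVec_le_mul_euclNorm_sq h u)
          (dotProduct_mulVec_le_mul_euclNorm_sq h w)
          (by simpa using hA.dotProduct_mulVec_nonneg w) (by positivity)
    _ = (a * (euclNorm u * euclNorm w)) ^ 2 := by ring

theorem dotProduct_mulVec_add_le_of_posSemidef {B J : Matrix (Fin n) (Fin n) ℝ} {ρ : ℝ}
    (h : (-(ρ • A) - (B + Jᵀ * A + A * J)).PosSemidef) (v : Fin n → ℝ) :
    (J *ᵥ v) ⬝ᵥ (A *ᵥ v) + v ⬝ᵥ (B *ᵥ v) + v ⬝ᵥ (A *ᵥ (J *ᵥ v)) ≤ -ρ * v ⬝ᵥ (A *ᵥ v) := by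
  have := h.dotProduct_mulVec_nonneg v
  simp only [star_trivial, sub_mulVec, add_mulVec, neg_mulVec, smul_mulVec, dotProduct_sub,
    dotProduct_add, dotProduct_neg, dotProduct_smul, smul_eq_mul, ← mulVec_mulVec,
    dotProduct_mulVec v Jᵀ, vecMul_transpose] at this
  linarith

end QuadraticForm

section PairEnergy

variable {n : ℕ}

theorem HasDerivAt.dotProduct_mulVec {u w : ℝ → Fin n → ℝ} {A : ℝ → Matrix (Fin n) (Fin n) ℝ}
    {u' w' : Fin n → ℝ} {A' : Matrix (Fin n) (Fin n) ℝ} {t : ℝ} (hu : HasDerivAt u u' t)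
    (hA : ∀ i j, HasDerivAt (fun s => A s i j) (A' i j) t) (hw : HasDerivAt w w' t) :
    HasDerivAt (fun s => u s ⬝ᵥ (A s *ᵥ w s))
      (u' ⬝ᵥ (A t *ᵥ w t) + u t ⬝ᵥ (A' *ᵥ w t) + u t ⬝ᵥ (A t *ᵥ w')) t := by
  have hsum : (fun s => u s ⬝ᵥ (A s *ᵥ w s)) = fun s => ∑ i, ∑ j, u s i * A s i j * w s j := by
    ext s
    simp only [dotProduct, mulVec, Finset.mul_sum, mul_assoc]
  rw [hsum]
  refine (HasDerivAt.fun_sum fun i _ => HasDerivAt.fun_sum fun j _ =>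
    ((hasDerivAt_pi.1 hu i).fun_mul (hA i j)).fun_mul (hasDerivAt_pi.1 hw j)).congr_deriv ?_
  simp only [dotProduct, mulVec, Finset.mul_sum, ← Finset.sum_add_distrib]
  refine Finset.sum_congr rfl fun i _ => Finset.sum_congr rfl fun j _ => ?_
  ring

theorem jac_mulVec (f : (Fin n → ℝ) → (Fin n → ℝ)) (x v : Fin n → ℝ) :
    jac f x *ᵥ v = fderiv ℝ f x v := by
  conv_rhs => rw [← Finset.univ_sum_single v]
  ext i
  simp only [jac, mulVec, dotProduct, of_apply, map_sum, Finset.sum_apply]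
  refine Finset.sum_congr rfl fun j _ => ?_
  rw [show Pi.single j (v j) = v j • (Pi.single j 1 : Fin n → ℝ) by
    rw [← Pi.single_smul, smul_eq_mul, mul_one], map_smul]
  simp [mul_comm]

noncomputable def matrixFDeriv (M : (Fin n → ℝ) → Matrix (Fin n) (Fin n) ℝ)
    (x v : Fin n → ℝ) : Matrix (Fin n) (Fin n) ℝ :=
  Matrix.of fun i j => fderiv ℝ (fun y => M y i j) x v

structure IsContractionMetric (f : (Fin n → ℝ) → (Fin n → ℝ))
    (M : (Fin n → ℝ) → Matrix (Fin n) (Fin n) ℝ) (a₁ a₂ ρ : ℝ) : Prop where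
  differentiable_entry : ∀ i j, Differentiable ℝ fun x => M x i j
  lower_pos : 0 < a₁
  lower_le_upper : a₁ ≤ a₂
  lower_bound : ∀ x, (M x - a₁ • 1).PosSemidef
  upper_bound : ∀ x, (a₂ • 1 - M x).PosSemidef
  contraction : ∀ x,
    (-(ρ • M x) - (matrixFDeriv M x (f x) + (jac f x)ᵀ * M x + M x * jac f x)).PosSemidef

structure IsForwardFlow (f : (Fin n → ℝ) → (Fin n → ℝ)) (X : (Fin n → ℝ) → ℝ → (Fin n → ℝ)) :
    Prop where
  apply_zero : ∀ x, X x 0 = x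
  hasDerivAt : ∀ x t, 0 ≤ t → HasDerivAt (X x) (f (X x t)) t

noncomputable def pairEnergy (M : (Fin n → ℝ) → Matrix (Fin n) (Fin n) ℝ)
    (x y : Fin n → ℝ) : ℝ :=
  (x - y) ⬝ᵥ (M x *ᵥ (x - y))

noncomputable def pairEnergyDeriv (f : (Fin n → ℝ) → (Fin n → ℝ))
    (M : (Fin n → ℝ) → Matrix (Fin n) (Fin n) ℝ) (x y : Fin n → ℝ) : ℝ :=
  (f x - f y) ⬝ᵥ (M x *ᵥ (x - y)) + (x - y) ⬝ᵥ (matrixFDeriv M x (f x) *ᵥ (x - y)) +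
    (x - y) ⬝ᵥ (M x *ᵥ (f x - f y))

variable {f : (Fin n → ℝ) → (Fin n → ℝ)} {M : (Fin n → ℝ) → Matrix (Fin n) (Fin n) ℝ}
  {a₁ a₂ ρ : ℝ}

theorem IsContractionMetric.upper_nonneg (hM : IsContractionMetric f M a₁ a₂ ρ) : 0 ≤ a₂ :=
  hM.lower_pos.le.trans hM.lower_le_upper

theorem hasDerivAt_pairEnergy (hM : ∀ i j, Differentiable ℝ fun x => M x i j)
    {γ η : ℝ → Fin n → ℝ} {t : ℝ} (hγ : HasDerivAt γ (f (γ t)) t)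
    (hη : HasDerivAt η (f (η t)) t) :
    HasDerivAt (fun s => pairEnergy M (γ s) (η s)) (pairEnergyDeriv f M (γ t) (η t)) t :=
  (hγ.sub hη).dotProduct_mulVec (fun i j => (hM i j (γ t)).hasFDerivAt.comp_hasDerivAt t hγ)
    (hγ.sub hη)

theorem IsContractionMetric.pairEnergyDeriv_le (hM : IsContractionMetric f M a₁ a₂ ρ)
    {ε : ℝ} (hε : 0 ≤ ε) {x y : Fin n → ℝ}
    (hrem : ‖f y - f x - fderiv ℝ f x (y - x)‖ ≤ ε * ‖y - x‖) :
    pairEnergyDeriv f M x y ≤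
      -ρ * pairEnergy M x y + 2 * a₂ * √n * ε * euclNorm (x - y) ^ 2 := by
  set Δ := x - y
  set r := f x - f y - jac f x *ᵥ Δ with hr
  have hr_norm : euclNorm r ≤ √n * ε * euclNorm Δ := by
    have hr_eq : r = -(f y - f x - fderiv ℝ f x (y - x)) := by
      rw [hr, jac_mulVec, show Δ = -(y - x) from (neg_sub y x).symm, map_neg]
      abel
    calc euclNorm r ≤ √n * ‖r‖ := euclNorm_le_sqrt_card_mul_norm r
      _ ≤ √n * (ε * ‖Δ‖) := by
          rw [hr_eq, norm_neg, ← norm_neg Δ, neg_sub]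
          gcongr
      _ ≤ √n * ε * euclNorm Δ := by
          rw [← mul_assoc]
          gcongr
          exact norm_le_euclNorm Δ
  have ha₂ := hM.upper_nonneg
  have hMx := (hM.lower_bound x).of_posSemidef_sub_smul_one hM.lower_pos.le
  have herr : a₂ * (euclNorm r * euclNorm Δ) ≤ a₂ * √n * ε * euclNorm Δ ^ 2 := by
    have := mul_le_mul_of_nonneg_right hr_norm (euclNorm_nonneg Δ)
    nlinarith
  have herr₁ := abs_le.1 (abs_dotProduct_mulVec_le ha₂ hMx (hM.upper_bound x) r Δ)
  have herr₂ := abs_le.1 (abs_dotProduct_mulVec_le ha₂ hMx (hM.upper_bound x) Δ r)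
  have hJ := dotProduct_mulVec_add_le_of_posSemidef (hM.contraction x) Δ
  have hsplit : f x - f y = jac f x *ᵥ Δ + r := by
    rw [hr]
    abel
  rw [pairEnergyDeriv, pairEnergy, hsplit, add_dotProduct, mulVec_add, dotProduct_add]
  linarith [herr₁.2, herr₂.2]

theorem IsContractionMetric.mul_euclNorm_sq_le_pairEnergy (hM : IsContractionMetric f M a₁ a₂ ρ)
    (x y : Fin n → ℝ) : a₁ * euclNorm (x - y) ^ 2 ≤ pairEnergy M x y :=
  mul_euclNorm_sq_le_dotProduct_mulVec (hM.lower_bound x) (x - y)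

theorem IsContractionMetric.pairEnergyDeriv_lt (hM : IsContractionMetric f M a₁ a₂ ρ)
    (hf : Differentiable ℝ f) {ν ε δ : ℝ} (hε : 0 ≤ ε) (hρν : 2 * a₂ * √n * ε < a₁ * (ρ - ν))
    {x y : Fin n → ℝ} (hnear : ∀ z, dist z x ≤ δ → ‖fderiv ℝ f z - fderiv ℝ f x‖ ≤ ε)
    (hxy : euclNorm (x - y) ≤ δ) (hpos : 0 < pairEnergy M x y) :
    pairEnergyDeriv f M x y < -ν * pairEnergy M x y := by
  have hdist : dist y x ≤ δ := by
    rw [dist_comm, dist_eq_norm]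
    exact (norm_le_euclNorm _).trans hxy
  have hrem := (convex_closedBall x δ).norm_image_sub_le_of_norm_fderiv_le' (fun z _ => hf z)
    hnear (Metric.mem_closedBall_self (dist_nonneg.trans hdist)) hdist
  have hderiv := hM.pairEnergyDeriv_le hε hrem
  have hlower := hM.mul_euclNorm_sq_le_pairEnergy x y
  have hκ : 2 * a₂ * √n * ε * (a₁ * euclNorm (x - y) ^ 2) ≤ 2 * a₂ * √n * ε * pairEnergy M x y :=
    mul_le_mul_of_nonneg_left hlower (by have := hM.upper_nonneg; positivity)
  have hgap := mul_lt_mul_of_pos_right hρν hpos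
  have : 2 * a₂ * √n * ε * euclNorm (x - y) ^ 2 < (ρ - ν) * pairEnergy M x y := by
    refine lt_of_mul_lt_mul_left ?_ hM.lower_pos.le
    linarith
  linarith

end PairEnergy

section Flow

variable {n : ℕ} {f : (Fin n → ℝ) → (Fin n → ℝ)} {M : (Fin n → ℝ) → Matrix (Fin n) (Fin n) ℝ}
  {X : (Fin n → ℝ) → ℝ → (Fin n → ℝ)} {a₁ a₂ ρ : ℝ}

theorem IsContractionMetric.euclNorm_flow_sub_le_of_fderiv_near
    (hM : IsContractionMetric f M a₁ a₂ ρ) (hX : IsForwardFlow f X) (hf : Differentiable ℝ f)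
    {T ν ε δ : ℝ} (hν : 0 ≤ ν) (hε : 0 ≤ ε) (hρν : 2 * a₂ * √n * ε < a₁ * (ρ - ν))
    {p q : Fin n → ℝ} (hpq : √(a₂ / a₁) * euclNorm (p - q) ≤ δ)
    (hnear : ∀ t ∈ Icc 0 T, ∀ z, dist z (X p t) ≤ δ →
      ‖fderiv ℝ f z - fderiv ℝ f (X p t)‖ ≤ ε) :
    ∀ t ∈ Icc 0 T,
      euclNorm (X p t - X q t) ≤ √(a₂ / a₁) * euclNorm (p - q) * Real.exp (-ν * t / 2) := by
  rcases eq_or_ne p q with rfl | hne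
  · intro t _
    simp [euclNorm]
  set V := fun t => pairEnergy M (X p t) (X q t) with hV
  have hV_lower (t : ℝ) : a₁ * euclNorm (X p t - X q t) ^ 2 ≤ V t :=
    hM.mul_euclNorm_sq_le_pairEnergy _ _
  have hV0_upper : V 0 ≤ a₂ * euclNorm (p - q) ^ 2 := by
    simpa [hV, pairEnergy, hX.apply_zero] using
      dotProduct_mulVec_le_mul_euclNorm_sq (hM.upper_bound p) (p - q)
  have hV0_pos : 0 < V 0 := by
    have hpos := euclNorm_pos (sub_ne_zero.2 hne)
    have := hV_lower 0
    simp only [hX.apply_zero] at this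
    exact lt_of_lt_of_le (mul_pos hM.lower_pos (pow_pos hpos 2)) this
  have hdecay : ∀ t ∈ Icc 0 T, V t ≤ V 0 * Real.exp (-ν * t) := by
    refine le_mul_exp_of_hasDerivAt (fun t ht => hasDerivAt_pairEnergy hM.differentiable_entry
      (hX.hasDerivAt p t ht.1) (hX.hasDerivAt q t ht.1)) fun t ht htouch => ?_
    -- at a touching time `V t ≤ V 0`, so the two solutions are still `δ`-close
    have hclose : euclNorm (X p t - X q t) ≤ √(a₂ / a₁) * euclNorm (p - q) := by
      refine le_sqrt_div_mul_of_mul_sq_le hM.lower_pos (euclNorm_nonneg _) ((hV_lower t).trans ?_)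
      refine htouch ▸ (mul_le_of_le_one_right hV0_pos.le ?_).trans hV0_upper
      exact Real.exp_le_one_iff.2 (by nlinarith [ht.1])
    exact hM.pairEnergyDeriv_lt hf hε hρν (hnear t (Ico_subset_Icc_self ht))
      (hclose.trans hpq) (show 0 < V t from htouch ▸ by positivity)
  intro t ht
  have hpq_nonneg := euclNorm_nonneg (p - q)
  rw [mul_assoc]
  refine le_sqrt_div_mul_of_mul_sq_le hM.lower_pos (by positivity) ?_
  calc a₁ * euclNorm (X p t - X q t) ^ 2 ≤ V 0 * Real.exp (-ν * t) :=
        (hV_lower t).trans (hdecay t ht)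
    _ ≤ a₂ * euclNorm (p - q) ^ 2 * Real.exp (-ν * t) := by gcongr
    _ = a₂ * (euclNorm (p - q) * Real.exp (-ν * t / 2)) ^ 2 := by
        rw [mul_pow, ← Real.exp_nat_mul]
        ring_nf

theorem IsContractionMetric.euclNorm_flow_sub_chain_le
    (hM : IsContractionMetric f M a₁ a₂ ρ) (hX : IsForwardFlow f X) (hf : Differentiable ℝ f)
    {T ν ε δ : ℝ} (hν : 0 ≤ ν) (hε : 0 ≤ ε) (hρν : 2 * a₂ * √n * ε < a₁ * (ρ - ν))
    {xa xb : Fin n → ℝ} {N : ℕ} (hN : √(a₂ / a₁) * (euclNorm (xa - xb) / N) ≤ δ)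
    (hnear : ∀ x ∈ Metric.cthickening (√(a₂ / a₁) * euclNorm (xa - xb)) (X xa '' Icc 0 T),
      ∀ z, dist z x ≤ δ → ‖fderiv ℝ f z - fderiv ℝ f x‖ ≤ ε) :
    ∀ k ≤ N, ∀ t ∈ Icc 0 T, euclNorm (X xa t - X (xa - ((k : ℝ) / N) • (xa - xb)) t) ≤
      k * (√(a₂ / a₁) * (euclNorm (xa - xb) / N) * Real.exp (-ν * t / 2)) := by
  set c := √(a₂ / a₁)
  set d := euclNorm (xa - xb)
  set y : ℕ → Fin n → ℝ := fun k => xa - ((k : ℝ) / N) • (xa - xb)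
  set e := fun t : ℝ => c * (d / N) * Real.exp (-ν * t / 2)
  have hy_step (k : ℕ) : euclNorm (y k - y (k + 1)) = d / N := by
    rw [sub_sub_sub_cancel_left, ← sub_smul, euclNorm_smul, Nat.cast_succ, add_div,
      add_sub_cancel_left, abs_of_nonneg (by positivity)]
    ring
  intro k
  induction k with
  | zero => intro _ t _; simp [euclNorm]
  | succ k ih =>
    intro hk t ht
    have hN_pos : (0 : ℝ) < N := by exact_mod_cast (by omega : 0 < N)
    have hkN : (k : ℝ) ≤ N := by exact_mod_cast (by omega : k ≤ N)
    have hpair := hM.euclNorm_flow_sub_le_of_fderiv_near hX hf hν hε hρν (by rwa [hy_step])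
      (fun s hs => hnear _ <| mem_cthickening_image_of_euclNorm_sub_le hs <|
        (ih (by omega) s hs).trans <| by
          have hexp : Real.exp (-ν * s / 2) ≤ 1 := Real.exp_le_one_iff.2 (by nlinarith [hs.1])
          have hc : 0 ≤ c := Real.sqrt_nonneg _
          have hd : 0 ≤ d := euclNorm_nonneg _
          calc k * e s ≤ N * (c * (d / N) * 1) := by simp only [e]; gcongr
            _ = c * d := by field_simp) t ht
    calc euclNorm (X xa t - X (y (k + 1)) t)
        ≤ euclNorm (X xa t - X (y k) t) + euclNorm (X (y k) t - X (y (k + 1)) t) :=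
          euclNorm_sub_le_euclNorm_sub_add_euclNorm_sub _ _ _
      _ ≤ k * e t + e t := by
          refine add_le_add (ih (by omega) t ht) ?_
          rwa [hy_step] at hpair
      _ = (k + 1 : ℕ) * e t := by push_cast; ring

theorem IsContractionMetric.euclNorm_flow_sub_le_of_fderiv_near_cthickening
    (hM : IsContractionMetric f M a₁ a₂ ρ) (hX : IsForwardFlow f X) (hf : Differentiable ℝ f)
    {T ν ε δ : ℝ} (hT : 0 ≤ T) (hν : 0 ≤ ν) (hε : 0 ≤ ε)
    (hρν : 2 * a₂ * √n * ε < a₁ * (ρ - ν)) (hδ : 0 < δ) {xa xb : Fin n → ℝ}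
    (hnear : ∀ x ∈ Metric.cthickening (√(a₂ / a₁) * euclNorm (xa - xb)) (X xa '' Icc 0 T),
      ∀ z, dist z x ≤ δ → ‖fderiv ℝ f z - fderiv ℝ f x‖ ≤ ε) :
    euclNorm (X xa T - X xb T) ≤ √(a₂ / a₁) * euclNorm (xa - xb) * Real.exp (-ν * T / 2) := by
  have hcd : 0 ≤ √(a₂ / a₁) * euclNorm (xa - xb) :=
    mul_nonneg (Real.sqrt_nonneg _) (euclNorm_nonneg _)
  obtain ⟨N, hN⟩ := exists_nat_gt (√(a₂ / a₁) * euclNorm (xa - xb) / δ)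
  have hN_pos : (0 : ℝ) < N := lt_of_le_of_lt (by positivity) hN
  have hstep : √(a₂ / a₁) * (euclNorm (xa - xb) / N) ≤ δ := by
    rw [div_lt_iff₀ hδ] at hN
    rw [← mul_div_assoc, div_le_iff₀ hN_pos]
    linarith
  have := hM.euclNorm_flow_sub_chain_le hX hf hν hε hρν hstep hnear N le_rfl T ⟨hT, le_rfl⟩
  rw [div_self hN_pos.ne', one_smul, sub_sub_cancel] at this
  convert this using 1
  field_simp

end Flow

theorem contraction_metric_implies_incremental_exponential_stability_general
    {n : ℕ}
    (f : (Fin n → ℝ) → (Fin n → ℝ)) (hf : ContDiff ℝ 1 f)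
    (M : (Fin n → ℝ) → Matrix (Fin n) (Fin n) ℝ)
    (hMC1 : ∀ i j, ContDiff ℝ 1 (fun x => M x i j))
    (a₁ a₂ : ℝ) (ha₁ : 0 < a₁) (ha₁₂ : a₁ ≤ a₂)
    (hlow : ∀ x, (M x - a₁ • 1).PosSemidef)
    (hup : ∀ x, (a₂ • 1 - M x).PosSemidef)
    (ρ : ℝ) (hρ : 0 < ρ)
    (hcontr : ∀ x,
      (-(ρ • M x) -
        ((Matrix.of fun i j => fderiv ℝ (fun y => M y i j) x (f x)) +
          (jac f x)ᵀ * M x + M x * jac f x)).PosSemidef)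
    (X : (Fin n → ℝ) → ℝ → (Fin n → ℝ))
    (hX0 : ∀ x, X x 0 = x)
    (hXode : ∀ x t, 0 ≤ t → HasDerivAt (X x) (f (X x t)) t) :
    ∀ xa xb : Fin n → ℝ, ∀ t ≥ (0:ℝ),
      euclNorm (X xa t - X xb t) ≤
        Real.sqrt (a₂ / a₁) * euclNorm (xa - xb) * Real.exp (-ρ * t / 2) := by
  intro xa xb t ht
  have hM : IsContractionMetric f M a₁ a₂ ρ :=
    ⟨fun i j => (hMC1 i j).differentiable one_ne_zero, ha₁, ha₁₂, hlow, hup, hcontr⟩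
  have hX : IsForwardFlow f X := ⟨hX0, hXode⟩
  refine (by fun_prop : ContinuousAt (fun ν => _ * Real.exp (-ν * t / 2)) ρ).ge_of_forall_mem_Ioo
    hρ fun ν hν => ?_
  obtain ⟨ε, hε, hρν⟩ := exists_pos_mul_lt (mul_pos ha₁ (sub_pos.2 hν.2)) (2 * a₂ * √n)
  have hcurve : IsCompact (X xa '' Icc 0 t) := isCompact_Icc.image_of_continuousOn
    fun s hs => (hXode xa s hs.1).continuousAt.continuousWithinAt
  obtain ⟨δ, hδ, hnear⟩ := exists_pos_forall_dist_le_of_isCompact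
    (hf.continuous_fderiv one_ne_zero) hcurve
    (mul_nonneg (Real.sqrt_nonneg _) (euclNorm_nonneg _)) hε
  simp only [dist_eq_norm] at hnear
  exact hM.euclNorm_flow_sub_le_of_fderiv_near_cthickening hX (hf.differentiable one_ne_zero) ht
    hν.1.le hε.le hρν hδ hnear

/-- a uniformly bounded contraction metric with rate `ρ` implies
exponential convergence of any two trajectories with overshoot `√(a₂/a₁)`. -/
theorem contraction_metric_implies_incremental_exponential_stability
    {n : ℕ}
    (f : (Fin n → ℝ) → (Fin n → ℝ)) (hf : ContDiff ℝ 1 f)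
    (M : (Fin n → ℝ) → Matrix (Fin n) (Fin n) ℝ)
    (hMC1 : ∀ i j, ContDiff ℝ 1 (fun x => M x i j))
    (hMsym : ∀ x, (M x)ᵀ = M x)
    (a₁ a₂ : ℝ) (ha₁ : 0 < a₁) (ha₁₂ : a₁ ≤ a₂)
    (hlow : ∀ x, (M x - a₁ • 1).PosSemidef)
    (hup : ∀ x, (a₂ • 1 - M x).PosSemidef)
    (ρ : ℝ) (hρ : 0 < ρ)
    (hcontr : ∀ x,
      (-(ρ • M x) -
        ((Matrix.of fun i j => fderiv ℝ (fun y => M y i j) x (f x)) +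
          (jac f x)ᵀ * M x + M x * jac f x)).PosSemidef)
    (X : (Fin n → ℝ) → ℝ → (Fin n → ℝ))
    (hX0 : ∀ x, X x 0 = x)
    (hXode : ∀ x t, 0 ≤ t → HasDerivAt (X x) (f (X x t)) t) :
    ∀ xa xb : Fin n → ℝ, ∀ t ≥ (0:ℝ),
      euclNorm (X xa t - X xb t) ≤
        Real.sqrt (a₂ / a₁) * euclNorm (xa - xb) * Real.exp (-ρ * t / 2) :=
  contraction_metric_implies_incremental_exponential_stability_general f hf M hMC1 a₁ a₂ ha₁ ha₁₂
    hlow hup ρ hρ hcontr X hX0 hXode
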